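/- arXiv:2605.20486 — 2 statements merged into one kernel-verified Lean document; each statement's English description precedes it below -/
import Mathlib

section
/- Let C ≥ 1, let (X,d) be a compact metric space and let {X_k}_{k∈ℕ} be a sequence of nonempty subsets of X, each endowed with the restriction d_k of d. Assume that (X_k,d_k) is C-quasiconvex for every k ∈ ℕ and that the Hausdorff–Pompeiu distance d_H(X_k, X) tends to 0 as k → ∞. Then (X,d) is C-quasiconvex. -/
/-!
A curve of finite length, reparametrised by arc length and rescaled to `[0, 1]`, is Lipschitz with
constant its length; hence `intrinsicDist x y < K` means that `x` and `y` are joined by a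
`K`-Lipschitz path on `[0, 1]`. Choose `p k, q k ∈ X_k` converging to `x, y`: quasiconvexity of
`X_k` gives `(C d(p k, q k) + 1/(k+1))`-Lipschitz paths from `p k` to `q k`. As `ℝ → X` is compact,
these paths have a pointwise limit along an ultrafilter, which is a `C d(x, y)`-Lipschitz path from
`x` to `y`.
-/

open Filter Topology Set MeasureTheory
open scoped ENNReal NNReal

/-- The local (descent) slope of `u` at `x`, relative to the ambient set `A`. -/
noncomputable def locSlopeOn {X : Type*} [PseudoMetricSpace X] (u : X → ℝ) (A : Set X) (x : X) :
    ℝ≥0∞ :=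
  Filter.limsup (fun y => ENNReal.ofReal (max (u x - u y) 0 / dist x y)) (𝓝[A \ {x}] x)

/-- The local (descent) slope of `u` at `x`. -/
noncomputable def locSlope {X : Type*} [PseudoMetricSpace X] (u : X → ℝ) (x : X) : ℝ≥0∞ :=
  locSlopeOn u Set.univ x

/-- The intrinsic (length) distance between two points. -/
noncomputable def intrinsicDist {X : Type*} [PseudoMetricSpace X] (x y : X) : ℝ≥0∞ :=
  ⨅ (T : ℝ) (_ : 0 ≤ T) (γ : ℝ → X) (_ : ContinuousOn γ (Set.Icc 0 T))
    (_ : γ 0 = x) (_ : γ T = y), eVariationOn γ (Set.Icc 0 T)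

/-- Compatibility condition (CC). -/
def SatisfiesCC {X : Type*} [PseudoMetricSpace X] (Ω : Set X) (ℓ g : X → ℝ) : Prop :=
  ∀ x ∈ frontier Ω, ∀ y ∈ frontier Ω, ∀ T > (0:ℝ), ∀ γ : ℝ → X,
    LipschitzOnWith 1 γ (Set.Icc 0 T) → Set.MapsTo γ (Set.Icc 0 T) (closure Ω) →
    γ 0 = y → γ T = x → Set.MapsTo γ (Set.Ioo 0 T) Ω →
    g x - g y ≤ ∫ t in (0:ℝ)..T, ℓ (γ t)

/-- Continuous pointwise solution of the slope eikonal equation. -/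
def IsEikonalSol {X : Type*} [PseudoMetricSpace X] (Ω : Set X) (ℓ g u : X → ℝ) : Prop :=
  ContinuousOn u (closure Ω) ∧
  (∀ x ∈ Ω, locSlopeOn u (closure Ω) x = ENNReal.ofReal (ℓ x)) ∧
  ∀ x ∈ frontier Ω, u x = g x

/-- Eikonal space. -/
def IsEikonalSpace (X : Type*) [MetricSpace X] : Prop :=
  ∀ Ω : Set X, IsOpen Ω → Ω.Nonempty → Ω ≠ Set.univ →
    ∀ ℓ g : X → ℝ, ContinuousOn ℓ Ω → (∃ M, ∀ x ∈ Ω, |ℓ x| ≤ M) →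
      (∃ c > 0, ∀ x ∈ Ω, c ≤ ℓ x) → ContinuousOn g (frontier Ω) →
      SatisfiesCC Ω ℓ g → ∃ u : X → ℝ, IsEikonalSol Ω ℓ g u

/-- The `E_{1,0}` property. -/
def HasE10 (X : Type*) [MetricSpace X] : Prop :=
  ∀ K : Set X, IsClosed K → K.Nonempty →
    ∃ u : X → ℝ, Continuous u ∧ (∀ x ∉ K, locSlope u x = 1) ∧ ∀ x ∈ K, u x = 0

open Metric

theorem HasConstantSpeedOnWith.lipschitzOnWith {E : Type*} [PseudoEMetricSpace E] {f : ℝ → E}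
    {s : Set ℝ} {l : ℝ≥0} (hf : HasConstantSpeedOnWith f s l) : LipschitzOnWith l f s := by
  have hordered : ∀ x ∈ s, ∀ y ∈ s, x ≤ y → edist (f x) (f y) ≤ l * edist x y := by
    intro x hx y hy hxy
    calc edist (f x) (f y) ≤ eVariationOn f (s ∩ Icc x y) :=
          eVariationOn.edist_le f ⟨hx, le_rfl, hxy⟩ ⟨hy, hxy, le_rfl⟩
      _ = l * edist x y := by
          rw [hf hx hy, edist_comm, edist_dist, Real.dist_eq, abs_of_nonneg (sub_nonneg.2 hxy),
            ENNReal.ofReal_mul (NNReal.coe_nonneg l), ENNReal.ofReal_coe_nnreal]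
  intro x hx y hy
  rcases le_total x y with hxy | hyx
  · exact hordered x hx y hy hxy
  · rw [edist_comm, edist_comm x]
    exact hordered y hy x hx hyx

theorem ContinuousOn.continuousOn_variationOnFromTo {α E : Type*} [LinearOrder α]
    [TopologicalSpace α] [OrderTopology α] [PseudoMetricSpace E] {f : α → E} {s : Set α} {a : α}
    (hf : ContinuousOn f s) (hbv : LocallyBoundedVariationOn f s) (ha : a ∈ s) :
    ContinuousOn (variationOnFromTo f s a) s := by
  intro b hb
  rw [← continuousWithinAt_sdiff_self, sdiff_eq, ← Iio_union_Ioi, inter_union_distrib_left]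
  refine ContinuousWithinAt.union ?_ ?_
  · have h := variationOnFromTo.tendsto_left ha hb hbv ((hf b hb).mono inter_subset_left).tendsto
    rwa [dist_self, sub_zero] at h
  · have h := variationOnFromTo.tendsto_right ha hb hbv ((hf b hb).mono inter_subset_left).tendsto
    rwa [dist_self, add_zero] at h

theorem ContinuousOn.exists_lipschitzOnWith_Icc_zero_one_of_eVariationOn_le {E : Type*}
    [MetricSpace E] {γ : ℝ → E} {T : ℝ} (hT : 0 ≤ T) (hγ : ContinuousOn γ (Icc 0 T)) {K : ℝ≥0}
    (hvar : eVariationOn γ (Icc 0 T) ≤ K) :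
    ∃ φ : ℝ → E, LipschitzOnWith K φ (Icc 0 1) ∧ φ 0 = γ 0 ∧ φ 1 = γ T := by
  set I := Icc (0 : ℝ) T
  have h0 : (0 : ℝ) ∈ I := left_mem_Icc.2 hT
  have hTI : T ∈ I := right_mem_Icc.2 hT
  have hbv : LocallyBoundedVariationOn γ I :=
    BoundedVariationOn.locallyBoundedVariationOn (ne_top_of_le_ne_top ENNReal.coe_ne_top hvar)
  set v := variationOnFromTo γ I 0
  set L : ℝ≥0 := (eVariationOn γ I).toNNReal
  have hvT : v T = L := by
    rw [show v T = _ from variationOnFromTo.eq_of_le γ I hT, inter_self,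
      ENNReal.coe_toNNReal_eq_toReal]
  have himage : Icc 0 (L : ℝ) ⊆ v '' I := by
    simpa [v, hvT, variationOnFromTo.self] using
      intermediate_value_Icc hT (hγ.continuousOn_variationOnFromTo hbv h0)
  set ψ := naturalParameterization γ I 0
  have hψ : ∀ b ∈ I, ψ (v b) = γ b := fun b hb =>
    edist_eq_zero.1 (edist_naturalParameterization_eq_zero hbv h0 hb)
  have hψ0 : ψ 0 = γ 0 := by simpa [v, variationOnFromTo.self] using hψ 0 h0
  have hψL : ψ L = γ T := by simpa [hvT] using hψ T hTI
  have hmul : LipschitzWith L (fun t : ℝ => (L : ℝ) * t) := LipschitzWith.of_dist_le_mul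
    fun s t => by rw [Real.dist_eq, Real.dist_eq, ← mul_sub, abs_mul, NNReal.abs_eq]
  have hmaps : MapsTo (fun t : ℝ => (L : ℝ) * t) (Icc 0 1) (Icc 0 L) := fun t ht =>
    ⟨mul_nonneg L.2 ht.1, mul_le_of_le_one_right L.2 ht.2⟩
  refine ⟨fun t => ψ (L * t), ?_, by simpa using hψ0, by simpa using hψL⟩
  have hφ := ((has_unit_speed_naturalParameterization γ hbv h0).lipschitzOnWith.mono
    himage).comp hmul.lipschitzOnWith hmaps
  rw [one_mul] at hφ
  exact hφ.weaken (by simpa using ENNReal.toNNReal_mono ENNReal.coe_ne_top hvar)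

theorem intrinsicDist_le_of_lipschitzOnWith {X : Type*} [PseudoMetricSpace X] {γ : ℝ → X}
    {K : ℝ≥0} (hγ : LipschitzOnWith K γ (Icc 0 1)) : intrinsicDist (γ 0) (γ 1) ≤ K := by
  calc intrinsicDist (γ 0) (γ 1) ≤ eVariationOn γ (Icc 0 1) :=
        iInf₂_le_of_le 1 zero_le_one <| iInf₂_le_of_le γ hγ.continuousOn <|
          iInf₂_le_of_le rfl rfl le_rfl
    _ ≤ K := by simpa using hγ.comp_eVariationOn_le (g := id) (mapsTo_id _)

theorem exists_lipschitzOnWith_of_intrinsicDist_lt {X : Type*} [MetricSpace X] {x y : X}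
    {K : ℝ≥0} (h : intrinsicDist x y < K) :
    ∃ γ : ℝ → X, LipschitzOnWith K γ (Icc 0 1) ∧ γ 0 = x ∧ γ 1 = y := by
  simp only [intrinsicDist, iInf_lt_iff] at h
  obtain ⟨T, hT, γ, hγ, rfl, rfl, hvar⟩ := h
  exact hγ.exists_lipschitzOnWith_Icc_zero_one_of_eVariationOn_le hT hvar.le

theorem exists_lipschitzOnWith_forall_tendsto_eq {ι α X : Type*} [PseudoMetricSpace α]
    [MetricSpace X] [CompactSpace X] {l : Filter ι} [l.NeBot] {f : ι → α → X} {s : Set α}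
    {K : ι → ℝ≥0} {K₀ : ℝ≥0} (hf : ∀ i, LipschitzOnWith (K i) (f i) s)
    (hK : Tendsto K l (𝓝 K₀)) :
    ∃ g : α → X, LipschitzOnWith K₀ g s ∧
      ∀ t x, Tendsto (fun i => f i t) l (𝓝 x) → g t = x := by
  set U := Ultrafilter.of l
  have hU : (U : Filter ι) ≤ l := Ultrafilter.of_le l
  set g := (U.map f).lim
  have hg : ∀ t, Tendsto (fun i => f i t) U (𝓝 (g t)) :=
    tendsto_pi_nhds.1 (Ultrafilter.le_nhds_lim (U.map f))
  refine ⟨g, LipschitzOnWith.of_dist_le_mul fun t ht t' ht' => ?_,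
    fun t x hx => tendsto_nhds_unique (hg t) (hx.mono_left hU)⟩
  exact le_of_tendsto_of_tendsto ((hg t).dist (hg t'))
    ((NNReal.tendsto_coe.2 (hK.mono_left hU)).mul_const _)
    (Eventually.of_forall fun i => (hf i).dist_le_mul t ht t' ht')

theorem exists_seq_mem_tendsto_of_hausdorffDist_univ_tendsto_zero {X : Type*}
    [PseudoMetricSpace X] [BoundedSpace X] {A : ℕ → Set X} (hA : ∀ n, (A n).Nonempty)
    (hH : Tendsto (fun n => hausdorffDist (A n) univ) atTop (𝓝 0)) (x : X) :
    ∃ p : ℕ → X, (∀ n, p n ∈ A n) ∧ Tendsto p atTop (𝓝 x) := by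
  have hclose : ∀ n, ∃ p ∈ A n, dist x p < hausdorffDist (A n) univ + 1 / (n + 1) := by
    intro n
    have hfin : hausdorffEDist univ (A n) ≠ ⊤ := hausdorffEDist_ne_top_of_nonempty_of_bounded
      ⟨x, mem_univ x⟩ (hA n) (.all _) (.all _)
    have h := infDist_le_hausdorffDist_of_mem (mem_univ x) hfin
    rw [hausdorffDist_comm] at h
    exact (infDist_lt_iff (hA n)).1 (by linarith [Nat.one_div_pos_of_nat (α := ℝ) (n := n)])
  choose p hpA hp using hclose
  refine ⟨p, hpA, tendsto_iff_dist_tendsto_zero.2 (squeeze_zero (fun _ => dist_nonneg)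
    (fun n => (dist_comm (p n) x).trans_le (hp n).le) ?_)⟩
  simpa using hH.add tendsto_one_div_add_atTop_nhds_zero_nat

theorem stmt14_general {X : Type*} [MetricSpace X] [CompactSpace X] (C : ℝ)
    (Xs : ℕ → Set X) (hne : ∀ k, (Xs k).Nonempty)
    (hqc : ∀ k, ∀ a b : Xs k, intrinsicDist a b ≤ ENNReal.ofReal (C * dist a b))
    (hH : Filter.Tendsto (fun k => Metric.hausdorffDist (Xs k) (Set.univ : Set X))
      Filter.atTop (𝓝 0)) :
    ∀ x y : X, intrinsicDist x y ≤ ENNReal.ofReal (C * dist x y) := by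
  intro x y
  obtain ⟨p, hpX, hp⟩ := exists_seq_mem_tendsto_of_hausdorffDist_univ_tendsto_zero hne hH x
  obtain ⟨q, hqX, hq⟩ := exists_seq_mem_tendsto_of_hausdorffDist_univ_tendsto_zero hne hH y
  set K : ℕ → ℝ≥0 := fun k => (C * dist (p k) (q k)).toNNReal + 1 / (k + 1)
  have hpath : ∀ k, ∃ γ : ℝ → X, LipschitzOnWith (K k) γ (Icc 0 1) ∧ γ 0 = p k ∧ γ 1 = q k := by
    intro k
    obtain ⟨γ, hγ, hγ0, hγ1⟩ := exists_lipschitzOnWith_of_intrinsicDist_lt (K := K k)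
      ((hqc k ⟨p k, hpX k⟩ ⟨q k, hqX k⟩).trans_lt
        (ENNReal.coe_lt_coe.2 (lt_add_of_pos_right _ Nat.one_div_pos_of_nat)))
    refine ⟨Subtype.val ∘ γ, ?_, by simp [hγ0], by simp [hγ1]⟩
    simpa using (LipschitzWith.subtype_val (Xs k)).comp_lipschitzOnWith hγ
  choose γ hγ hγ0 hγ1 using hpath
  have hK : Tendsto K atTop (𝓝 ((C * dist x y).toNNReal + 0)) :=
    ((continuous_real_toNNReal.tendsto _).comp ((hp.dist hq).const_mul C)).add
      tendsto_one_div_add_atTop_nhds_zero_nat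
  rw [add_zero] at hK
  obtain ⟨g, hg, hlim⟩ := exists_lipschitzOnWith_forall_tendsto_eq hγ hK
  have hlen := intrinsicDist_le_of_lipschitzOnWith hg
  rwa [hlim 0 x (by simpa [hγ0] using hp), hlim 1 y (by simpa [hγ1] using hq)] at hlen

/-- A compact metric space approximated in the Hausdorff–Pompeiu distance by
`C`-quasiconvex subsets is itself `C`-quasiconvex. -/
theorem stmt14 {X : Type*} [MetricSpace X] [CompactSpace X] (C : ℝ) (hC : 1 ≤ C)
    (Xs : ℕ → Set X) (hne : ∀ k, (Xs k).Nonempty)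
    (hqc : ∀ k, ∀ a b : Xs k, intrinsicDist a b ≤ ENNReal.ofReal (C * dist a b))
    (hH : Filter.Tendsto (fun k => Metric.hausdorffDist (Xs k) (Set.univ : Set X))
      Filter.atTop (𝓝 0)) :
    ∀ x y : X, intrinsicDist x y ≤ ENNReal.ofReal (C * dist x y) :=
  stmt14_general C Xs hne hqc hH
end

section
/- Let (X,d) be a compact metric space with the E_{1,0}-property. Then the intrinsic distance d_I takes only finite values on X × X, and the map d_I : X × X → ℝ is continuous (with respect to the topology induced by d). -/
open Filter Topology Set MeasureTheory
open scoped ENNReal NNReal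

/-!
Fix `y` and apply the `E_{1,0}` property to `K = {y}`: this gives a continuous `u` with slope `1`
off `y`. From any `x`, consider the points reachable by chains of steps of length at most `η`,
each step no longer than twice the drop of `u` along it. At a minimum `w` of `u` on the closure
of this set, the slope forces `w = y`: otherwise a descent step from a reachable point near `w`
lands strictly below `u w`. Spending time `2 (u a - u b)` on each step `a → b` turns a chain
into a curve that is `1`-Lipschitz up to an error `η`; by compactness, a pointwise ultrafilter
limit as `η → 0` is a `1`-Lipschitz curve from `x` to `y` on `[0, 2 (u x - u y)]`. Hence
`d_I(x, y)` and `d_I(y, x)` are finite and tend to `0` as `x → y`, and the triangle inequality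
for `d_I` turns this into continuity.
-/

open Relation

section

variable {X : Type*} [MetricSpace X]

lemma exists_lt_sub_of_ofReal_lt_locSlope {u : X → ℝ} {x : X} {c : ℝ}
    (hc : ENNReal.ofReal c < locSlope u x) {r : ℝ} (hr : 0 < r) :
    ∃ z, z ≠ x ∧ dist x z < r ∧ c * dist x z < u x - u z := by
  have hfreq := frequently_lt_of_lt_limsup (by isBoundedDefault) hc
  have hnear : ∀ᶠ z in 𝓝[univ \ {x}] x, z ≠ x ∧ dist x z < r :=
    (eventually_mem_nhdsWithin.and (nhdsWithin_le_nhds (Metric.ball_mem_nhds x hr))).mono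
      fun z hz => ⟨hz.1.2, Metric.mem_ball'.1 hz.2⟩
  obtain ⟨z, hlt, hzx, hzr⟩ := (hfreq.and_eventually hnear).exists
  have hd : 0 < dist x z := dist_pos.2 hzx.symm
  obtain ⟨hcz, hpos⟩ := (ENNReal.ofReal_lt_ofReal_iff').1 hlt
  rw [lt_div_iff₀ hd] at hcz
  rw [div_pos_iff_of_pos_right hd, lt_max_iff] at hpos
  refine ⟨z, hzx, hzr, ?_⟩
  rwa [max_eq_left (hpos.resolve_right (lt_irrefl 0)).le] at hcz

lemma LipschitzWith.eVariationOn_Icc_le {K : ℝ≥0} {γ : ℝ → X} (hγ : LipschitzWith K γ)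
    (a b : ℝ) : eVariationOn γ (Icc a b) ≤ K * ENNReal.ofReal (b - a) := by
  calc eVariationOn γ (Icc a b) = eVariationOn (γ ∘ id) (Icc a b) := rfl
    _ ≤ K * eVariationOn id (Icc a b) :=
      hγ.lipschitzOnWith.comp_eVariationOn_le (mapsTo_univ _ _)
    _ = K * ENNReal.ofReal (b - a) := by rw [eVariationOn_id_Icc]

lemma intrinsicDist_le_eVariationOn {γ : ℝ → X} {T : ℝ} (hT : 0 ≤ T)
    (hγ : ContinuousOn γ (Icc 0 T)) : intrinsicDist (γ 0) (γ T) ≤ eVariationOn γ (Icc 0 T) :=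
  iInf₂_le_of_le T hT <| iInf₂_le_of_le γ hγ <| iInf₂_le_of_le rfl rfl le_rfl

lemma intrinsicDist_le_of_lipschitzWith {γ : ℝ → X} (hγ : LipschitzWith 1 γ) {T : ℝ}
    (hT : 0 ≤ T) : intrinsicDist (γ 0) (γ T) ≤ ENNReal.ofReal T := by
  simpa using (intrinsicDist_le_eVariationOn hT hγ.continuous.continuousOn).trans
    (hγ.eVariationOn_Icc_le 0 T)

lemma intrinsicDist_le_eVariationOn_add {γ₁ γ₂ : ℝ → X} {T₁ T₂ : ℝ} (hT₁ : 0 ≤ T₁)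
    (hT₂ : 0 ≤ T₂) (hγ₁ : ContinuousOn γ₁ (Icc 0 T₁)) (hγ₂ : ContinuousOn γ₂ (Icc 0 T₂))
    (hjoin : γ₁ T₁ = γ₂ 0) :
    intrinsicDist (γ₁ 0) (γ₂ T₂) ≤ eVariationOn γ₁ (Icc 0 T₁) + eVariationOn γ₂ (Icc 0 T₂) := by
  set γ : ℝ → X := fun s => if s ≤ T₁ then γ₁ s else γ₂ (s - T₁)
  have hT : T₁ ≤ T₁ + T₂ := le_add_of_nonneg_right hT₂
  have hγ₁' : EqOn γ γ₁ (Icc 0 T₁) := fun s hs => if_pos hs.2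
  have hγ₂' : EqOn γ (γ₂ ∘ (· - T₁)) (Icc T₁ (T₁ + T₂)) := by
    intro s hs
    rcases hs.1.eq_or_lt with rfl | hlt
    · simp [γ, hjoin]
    · simp [γ, not_le.2 hlt]
  have hshift : (· - T₁) '' Icc T₁ (T₁ + T₂) = Icc 0 T₂ := by simp
  have hcont : ContinuousOn γ (Icc 0 (T₁ + T₂)) := by
    rw [← Icc_union_Icc_eq_Icc hT₁ hT]
    refine (hγ₁.congr hγ₁').union_of_isClosed (ContinuousOn.congr ?_ hγ₂') isClosed_Icc
      isClosed_Icc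
    exact hγ₂.comp (continuous_sub_right T₁).continuousOn (hshift ▸ mapsTo_image _ _)
  have h0 : γ 0 = γ₁ 0 := hγ₁' ⟨le_rfl, hT₁⟩
  have hend : γ (T₁ + T₂) = γ₂ T₂ := by simpa using hγ₂' ⟨hT, le_rfl⟩
  calc intrinsicDist (γ₁ 0) (γ₂ T₂) ≤ eVariationOn γ (Icc 0 (T₁ + T₂)) :=
        h0 ▸ hend ▸ intrinsicDist_le_eVariationOn (add_nonneg hT₁ hT₂) hcont
    _ = eVariationOn γ (Icc 0 T₁) + eVariationOn γ (Icc T₁ (T₁ + T₂)) := by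
        simpa using (eVariationOn.Icc_add_Icc γ hT₁ hT (mem_univ T₁)).symm
    _ = eVariationOn γ₁ (Icc 0 T₁) + eVariationOn γ₂ (Icc 0 T₂) := by
        rw [eVariationOn.eq_of_eqOn hγ₁', eVariationOn.eq_of_eqOn hγ₂',
          eVariationOn.comp_eq_of_monotoneOn _ _ fun a _ b _ hab => sub_le_sub_right hab T₁,
          hshift]

lemma intrinsicDist_triangle (x y z : X) :
    intrinsicDist x z ≤ intrinsicDist x y + intrinsicDist y z := by
  conv_rhs => simp only [intrinsicDist, ENNReal.iInf_add, ENNReal.add_iInf]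
  simp only [le_iInf_iff]
  rintro T₂ hT₂ γ₂ hγ₂ rfl rfl T₁ hT₁ γ₁ hγ₁ rfl hjoin
  exact intrinsicDist_le_eVariationOn_add hT₁ hT₂ hγ₁ hγ₂ hjoin

def DescentStep (φ : X → ℝ) (η : ℝ) (a b : X) : Prop :=
  dist a b ≤ η ∧ dist a b ≤ φ a - φ b

lemma DescentStep.dist_le_of_reflTransGen {φ : X → ℝ} {η : ℝ} {x z : X}
    (h : ReflTransGen (DescentStep φ η) x z) : dist x z ≤ φ x - φ z := by
  induction h using ReflTransGen.head_induction_on with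
  | refl => simp
  | @head a b hab _ ih => linarith [dist_triangle a b z, hab.2]

lemma DescentStep.exists_curve_of_reflTransGen {φ : X → ℝ} {η : ℝ} (hη : 0 ≤ η) {x z : X}
    (h : ReflTransGen (DescentStep φ η) x z) :
    ∃ γ : ℝ → X, γ 0 = x ∧ (∀ s, φ x - φ z ≤ s → γ s = z) ∧
      ∀ s s', dist (γ s) (γ s') ≤ dist s s' + η := by
  -- Starting without a jump is what lets a prepended step keep the error within `η`.
  suffices ∃ γ : ℝ → X, γ 0 = x ∧ (∀ s, φ x - φ z ≤ s → γ s = z) ∧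
      (∀ s, dist x (γ s) ≤ |s|) ∧ ∀ s s', dist (γ s) (γ s') ≤ dist s s' + η by
    obtain ⟨γ, h0, hend, -, hγ⟩ := this
    exact ⟨γ, h0, hend, hγ⟩
  induction h using ReflTransGen.head_induction_on with
  | refl =>
    exact ⟨fun _ => z, rfl, fun _ _ => rfl, by simp, fun _ _ => by rw [dist_self]; positivity⟩
  | @head a b hab hbz ih =>
    obtain ⟨γ, h0, hend, hstart, hγ⟩ := ih
    set τ := φ a - φ b
    have hτ : dist a b ≤ τ := hab.2
    have hτ0 : 0 ≤ τ := dist_nonneg.trans hτ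
    have hφ : 0 ≤ φ b - φ z := dist_nonneg.trans (DescentStep.dist_le_of_reflTransGen hbz)
    refine ⟨fun s => if s < τ then a else γ (s - τ), ?_, fun s hs => ?_, fun s => ?_, ?_⟩
    · dsimp only
      split_ifs with h
      · rfl
      · have : τ = 0 := by linarith
        simpa [this, h0] using (dist_le_zero.1 (this ▸ hτ)).symm
    · dsimp only
      rw [if_neg (by linarith), hend]
      linarith
    · dsimp only
      split_ifs with h
      · simp
      · calc dist a (γ (s - τ)) ≤ dist a b + dist b (γ (s - τ)) := dist_triangle _ _ _
          _ ≤ τ + |s - τ| := add_le_add hτ (h0 ▸ hstart _)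
          _ ≤ |s| := by rw [abs_of_nonneg (by linarith), abs_of_nonneg (by linarith)]; linarith
    · intro s s'
      wlog hss : s ≤ s' generalizing s s'
      · rw [dist_comm, dist_comm s]
        exact this s' s (le_of_not_ge hss)
      dsimp only
      rw [Real.dist_eq, abs_of_nonpos (by linarith)]
      split_ifs with h h' h'
      · simp only [dist_self]
        linarith
      · calc dist a (γ (s' - τ)) ≤ dist a b + dist b (γ (s' - τ)) := dist_triangle _ _ _
          _ ≤ η + |s' - τ| := add_le_add hab.1 (h0 ▸ hstart _)
          _ ≤ -(s - s') + η := by rw [abs_of_nonneg (by linarith)]; linarith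
      · linarith
      · have := hγ (s - τ) (s' - τ)
        rwa [Real.dist_eq, sub_sub_sub_cancel_right, abs_of_nonpos (by linarith)] at this

lemma exists_lipschitzWith_one_of_tendsto [CompactSpace X] {f : ℕ → ℝ → X} {ε : ℕ → ℝ}
    (hε : Tendsto ε atTop (𝓝 0)) (hf : ∀ n s s', dist (f n s) (f n s') ≤ dist s s' + ε n)
    {a b : ℝ} {x y : X} (ha : Tendsto (fun n => f n a) atTop (𝓝 x))
    (hb : Tendsto (fun n => f n b) atTop (𝓝 y)) :
    ∃ γ : ℝ → X, LipschitzWith 1 γ ∧ γ a = x ∧ γ b = y := by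
  set 𝒰 : Ultrafilter ℕ := Ultrafilter.of atTop
  have h𝒰 : (𝒰 : Filter ℕ) ≤ atTop := Ultrafilter.of_le _
  choose γ hγ using fun s =>
    isCompact_univ.ultrafilter_le_nhds (𝒰.map fun n => f n s) (by simp)
  have hlim : ∀ s, Tendsto (fun n => f n s) 𝒰 (𝓝 (γ s)) := fun s => (hγ s).2
  refine ⟨γ, LipschitzWith.of_dist_le_mul fun s s' => ?_, tendsto_nhds_unique (hlim a)
    (ha.mono_left h𝒰), tendsto_nhds_unique (hlim b) (hb.mono_left h𝒰)⟩
  have hbound : Tendsto (fun n => dist s s' + ε n) 𝒰 (𝓝 (dist s s')) := by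
    simpa using tendsto_const_nhds.add (hε.mono_left h𝒰)
  simpa using le_of_tendsto_of_tendsto' ((hlim s).dist (hlim s')) hbound (hf · s s')

lemma exists_mem_isMinOn_closure_reflTransGen [CompactSpace X] {u : X → ℝ} {K : Set X}
    (hu : Continuous u) (hs : ∀ x ∉ K, 1 ≤ locSlope u x) (x : X) {η : ℝ} (hη : 0 < η) :
    ∃ w ∈ K, w ∈ closure {z | ReflTransGen (DescentStep (fun z => 2 * u z) η) x z} ∧
      IsMinOn u (closure {z | ReflTransGen (DescentStep (fun z => 2 * u z) η) x z}) w := by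
  set R := {z | ReflTransGen (DescentStep (fun z => 2 * u z) η) x z}
  obtain ⟨w, hwR, hmin⟩ := isClosed_closure.isCompact.exists_isMinOn
    ⟨x, subset_closure ReflTransGen.refl⟩ hu.continuousOn (s := closure R)
  refine ⟨w, by_contra fun hwK => ?_, hwR, hmin⟩
  obtain ⟨w', hw'w, hww', hdrop⟩ := exists_lt_sub_of_ofReal_lt_locSlope (c := 3 / 4)
    ((ENNReal.ofReal_lt_one.2 (by norm_num)).trans_le (hs w hwK)) (half_pos hη)
  have hδ : 0 < dist w w' := dist_pos.2 hw'w.symm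
  -- Jumping to `w'` from a reachable point close enough to `w` is a descent step.
  obtain ⟨z, hzR, hwz⟩ := Metric.mem_closure_iff.1 hwR _ (lt_min (half_pos hη) (half_pos hδ))
  have hwz' : u w ≤ u z := hmin (subset_closure hzR)
  have hzw' : dist z w' ≤ dist w z + dist w w' := by
    simpa [dist_comm] using dist_triangle z w w'
  have hw'R : w' ∈ R := ReflTransGen.tail hzR
    ⟨by linarith [min_le_left (η / 2) (dist w w' / 2)],
      by linarith [min_le_right (η / 2) (dist w w' / 2)]⟩
  have hww'' : u w ≤ u w' := hmin (subset_closure hw'R)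
  linarith

lemma intrinsicDist_le_of_one_le_locSlope [CompactSpace X] {u : X → ℝ} {y : X}
    (hu : Continuous u) (hs : ∀ x ≠ y, 1 ≤ locSlope u x) (x : X) :
    intrinsicDist x y ≤ ENNReal.ofReal (2 * (u x - u y)) ∧
      intrinsicDist y x ≤ ENNReal.ofReal (2 * (u x - u y)) := by
  set L := 2 * (u x - u y)
  have hchain : ∀ n : ℕ, ∃ γ : ℝ → X, γ 0 = x ∧ dist (γ L) y < 1 / (n + 1) ∧
      ∀ s s', dist (γ s) (γ s') ≤ dist s s' + 1 / (n + 1) := by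
    intro n
    have hη : (0 : ℝ) < 1 / (n + 1) := Nat.one_div_pos_of_nat
    obtain ⟨w, rfl, hwR, hmin⟩ := exists_mem_isMinOn_closure_reflTransGen hu hs x hη
    obtain ⟨z, hxz, hwz⟩ := Metric.mem_closure_iff.1 hwR _ hη
    have hwz' : u w ≤ u z := hmin (subset_closure hxz)
    obtain ⟨γ, h0, hend, hγ⟩ := DescentStep.exists_curve_of_reflTransGen hη.le hxz
    refine ⟨γ, h0, ?_, hγ⟩
    rw [hend L (by linarith), dist_comm]
    exact hwz
  choose γ h0 hL hγ using hchain
  have hγL : Tendsto (fun n => γ n L) atTop (𝓝 y) :=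
    tendsto_iff_dist_tendsto_zero.2 <| squeeze_zero (fun _ => dist_nonneg) (fun n => (hL n).le)
      tendsto_one_div_add_atTop_nhds_zero_nat
  obtain ⟨Γ, hΓ, hΓ0, hΓL⟩ := exists_lipschitzWith_one_of_tendsto
    tendsto_one_div_add_atTop_nhds_zero_nat hγ (tendsto_const_nhds.congr fun n => (h0 n).symm) hγL
  have hL0 : 0 ≤ L := by
    obtain ⟨w, rfl, hwR, hmin⟩ := exists_mem_isMinOn_closure_reflTransGen hu hs x one_pos
    have hwx : u w ≤ u x := hmin (subset_closure ReflTransGen.refl)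
    linarith
  have hΓ' : LipschitzWith 1 fun s => Γ (L - s) := by
    refine LipschitzWith.of_dist_le_mul fun s s' => ?_
    rw [NNReal.coe_one, one_mul, ← dist_sub_left L]
    simpa using hΓ.dist_le_mul (L - s) (L - s')
  constructor
  · simpa [hΓ0, hΓL] using intrinsicDist_le_of_lipschitzWith hΓ hL0
  · simpa [hΓ0, hΓL] using intrinsicDist_le_of_lipschitzWith hΓ' hL0

end

lemma continuous_of_le_add_of_tendsto_zero {Y : Type*} [TopologicalSpace Y] {f : Y → Y → ℝ}
    (htri : ∀ x y z, f x z ≤ f x y + f y z)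
    (hleft : ∀ y, Tendsto (fun x => f x y) (𝓝 y) (𝓝 0))
    (hright : ∀ x, Tendsto (f x) (𝓝 x) (𝓝 0)) :
    Continuous fun p : Y × Y => f p.1 p.2 := by
  refine continuous_iff_continuousAt.2 fun ⟨x₀, y₀⟩ => ?_
  have h₁ : Tendsto (fun p : Y × Y => f p.1 x₀) (𝓝 (x₀, y₀)) (𝓝 0) :=
    (hleft x₀).comp continuousAt_fst
  have h₂ : Tendsto (fun p : Y × Y => f x₀ p.1) (𝓝 (x₀, y₀)) (𝓝 0) :=
    (hright x₀).comp continuousAt_fst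
  have h₃ : Tendsto (fun p : Y × Y => f p.2 y₀) (𝓝 (x₀, y₀)) (𝓝 0) :=
    (hleft y₀).comp continuousAt_snd
  have h₄ : Tendsto (fun p : Y × Y => f y₀ p.2) (𝓝 (x₀, y₀)) (𝓝 0) :=
    (hright y₀).comp continuousAt_snd
  refine tendsto_of_tendsto_of_tendsto_of_le_of_le (g := fun p => f x₀ y₀ - (f x₀ p.1 + f p.2 y₀))
    (h := fun p => f p.1 x₀ + f x₀ y₀ + f y₀ p.2) ?_ ?_ (fun p => ?_) (fun p => ?_)
  · simpa using tendsto_const_nhds.sub (h₂.add h₃)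
  · simpa using (h₁.add tendsto_const_nhds).add h₄
  · linarith [htri x₀ p.1 y₀, htri p.1 p.2 y₀]
  · linarith [htri p.1 x₀ p.2, htri x₀ y₀ p.2]

lemma tendsto_toReal_zero_of_le_ofReal {Y : Type*} {l : Filter Y} {f : Y → ℝ≥0∞} {g : Y → ℝ}
    (hg : Tendsto g l (𝓝 0)) (hfg : ∀ x, f x ≤ ENNReal.ofReal (g x)) :
    Tendsto (fun x => (f x).toReal) l (𝓝 0) := by
  refine squeeze_zero (fun _ => ENNReal.toReal_nonneg) (fun x => ?_)
    (by simpa using hg.max (tendsto_const_nhds (x := (0 : ℝ))))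
  exact (ENNReal.toReal_mono ENNReal.ofReal_ne_top (hfg x)).trans_eq ENNReal.toReal_ofReal'

/-- In a compact metric space with the `E_{1,0}`-property, the intrinsic
distance is finite and continuous. -/
theorem stmt15 {X : Type*} [MetricSpace X] [CompactSpace X] (h : HasE10 X) :
    (∀ x y : X, intrinsicDist x y ≠ ⊤) ∧
      Continuous (fun p : X × X => (intrinsicDist p.1 p.2).toReal) := by
  have hsmall : ∀ y : X, ∃ g : X → ℝ, Tendsto g (𝓝 y) (𝓝 0) ∧
      ∀ x, intrinsicDist x y ≤ ENNReal.ofReal (g x) ∧ intrinsicDist y x ≤ ENNReal.ofReal (g x) := by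
    intro y
    obtain ⟨u, hu, hs, -⟩ := h {y} isClosed_singleton (singleton_nonempty y)
    exact ⟨fun x => 2 * (u x - u y), by simpa using ((hu.tendsto y).sub_const (u y)).const_mul 2,
      intrinsicDist_le_of_one_le_locSlope hu fun x hx => (hs x hx).ge⟩
  have hfin : ∀ x y : X, intrinsicDist x y ≠ ⊤ := fun x y => by
    obtain ⟨g, -, hg⟩ := hsmall y
    exact ne_top_of_le_ne_top ENNReal.ofReal_ne_top (hg x).1
  refine ⟨hfin, continuous_of_le_add_of_tendsto_zero (fun x y z => ENNReal.toReal_le_add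
    (intrinsicDist_triangle x y z) (hfin x y) (hfin y z)) (fun y => ?_) (fun y => ?_)⟩ <;>
  obtain ⟨g, hg, hb⟩ := hsmall y
  · exact tendsto_toReal_zero_of_le_ofReal hg fun x => (hb x).1
  · exact tendsto_toReal_zero_of_le_ofReal hg fun x => (hb x).2
end
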